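/- Ziegler's converse criterion: Let A be a central arrangement in K^ℓ, H_1 ∈ A, and ρ : D_1(A) → D(A^{H_1}, m^{H_1}) the restriction map. If ρ is surjective and the Ziegler multirestriction (A^{H_1}, m^{H_1}) is free with exponents (d_2, …, d_ℓ), then A is free with exponents (1, d_2, …, d_ℓ). -/

import Mathlib

open MvPolynomial

/-- The linear form `α = Σ_j a_j x_j` with coefficient vector `a`. -/
noncomputable def linForm {K : Type} [Field K] {ℓ : ℕ} (a : Fin ℓ → K) :
    MvPolynomial (Fin ℓ) K :=
  ∑ j, C (a j) * X j

/-- Application `θ(α) = Σ_j a_j f_j` of a derivation `θ = Σ f_j ∂_{x_j}` to the linear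
form with coefficient vector `a`, as a linear map in `θ`. -/
noncomputable def appL {K : Type} [Field K] {ℓ : ℕ} (a : Fin ℓ → K) :
    (Fin ℓ → MvPolynomial (Fin ℓ) K) →ₗ[MvPolynomial (Fin ℓ) K] MvPolynomial (Fin ℓ) K :=
  ∑ j, (C (a j) : MvPolynomial (Fin ℓ) K) • (LinearMap.proj j :
    (Fin ℓ → MvPolynomial (Fin ℓ) K) →ₗ[MvPolynomial (Fin ℓ) K] MvPolynomial (Fin ℓ) K)

/-- The logarithmic derivation module `D(A,m)` of the multiarrangement with defining
forms `c i` and multiplicities `m i`. -/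
noncomputable def Dlog {K : Type} [Field K] {ℓ : ℕ} {η : Type} (c : η → Fin ℓ → K)
    (m : η → ℕ) :
    Submodule (MvPolynomial (Fin ℓ) K) (Fin ℓ → MvPolynomial (Fin ℓ) K) where
  carrier := {θ | ∀ i, linForm (c i) ^ m i ∣ appL (c i) θ}
  add_mem' := fun ha hb i => by rw [map_add]; exact dvd_add (ha i) (hb i)
  zero_mem' := fun i => by rw [map_zero]; exact dvd_zero _
  smul_mem' := fun s θ h i => by rw [map_smul, smul_eq_mul]; exact (h i).mul_left s


/-- The coefficient vector of the restriction of the linear form `c i` to the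
hyperplane `{x_0 = 0}` (in the coordinates `x_1, …, x_ℓ`). -/
def cbar {K : Type} [Field K] {ℓ : ℕ} {η : Type} (c : η → Fin (ℓ + 1) → K) (i : η) :
    Fin ℓ → K :=
  fun j => c i j.succ

/-- The Ziegler multiplicity `m^{H₁}` of the restricted hyperplane `H_i ∩ H₁`
(`H₁` indexed by `i₀`):  the number of hyperplanes of `A` containing `H_i ∩ H₁`,
minus one. -/
noncomputable def zmult {K : Type} [Field K] {ℓ : ℕ} {η : Type} [Fintype η]
    (c : η → Fin (ℓ + 1) → K) (i₀ i : η) : ℕ := by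
  classical exact
    (Finset.univ.filter fun i' => i' ≠ i₀ ∧ ∃ t : K, cbar c i' = t • cbar c i).card

/-- The logarithmic derivation module `D(A^{H₁}, m^{H₁})` of the Ziegler
multirestriction of `A` to the hyperplane `H₁ = {x_0 = 0}` (indexed by `i₀`). -/
noncomputable def DlogZ {K : Type} [Field K] {ℓ : ℕ} {η : Type} [Fintype η]
    (c : η → Fin (ℓ + 1) → K) (i₀ : η) :
    Submodule (MvPolynomial (Fin ℓ) K) (Fin ℓ → MvPolynomial (Fin ℓ) K) := by
  classical exact Dlog (cbar c) (fun i => if i = i₀ then 0 else zmult c i₀ i)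

/-- Restriction of polynomials to the hyperplane `{x_0 = 0}`: substitute `x_0 = 0`
and rename `x_{j+1}` to `x_j`. -/
noncomputable def restPoly {K : Type} [Field K] {ℓ : ℕ} :
    MvPolynomial (Fin (ℓ + 1)) K →ₐ[K] MvPolynomial (Fin ℓ) K :=
  MvPolynomial.aeval (Fin.cases 0 MvPolynomial.X)

/-- The restriction `ρ(θ) = θ|_{x_0 = 0}` of a derivation `θ` with `θ(x_0) = 0` to the
hyperplane `{x_0 = 0}`. -/
noncomputable def restDer {K : Type} [Field K] {ℓ : ℕ}
    (θ : Fin (ℓ + 1) → MvPolynomial (Fin (ℓ + 1)) K) :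
    Fin ℓ → MvPolynomial (Fin ℓ) K :=
  fun j => restPoly (θ j.succ)

section ZC
variable {K : Type} [Field K] {ℓ : ℕ}

lemma appL_apply (a : Fin ℓ → K) (θ : Fin ℓ → MvPolynomial (Fin ℓ) K) :
    appL a θ = ∑ j, C (a j) * θ j := by
  simp [appL]

lemma linForm_isHomogeneous (a : Fin ℓ → K) : (linForm a).IsHomogeneous 1 :=
  MvPolynomial.IsHomogeneous.sum _ _ _ fun j _ => isHomogeneous_C_mul_X _ _

lemma coeff_linForm (a : Fin ℓ → K) (j : Fin ℓ) :
    coeff (Finsupp.single j 1) (linForm a) = a j := by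
  rw [linForm]
  rw [MvPolynomial.coeff_sum]
  simp only [coeff_C_mul, coeff_X']
  rw [Finset.sum_eq_single j]
  · simp
  · intro j' _ hj'
    rw [if_neg, mul_zero]
    exact fun h => hj' (by simpa [Finsupp.single_left_inj (one_ne_zero (α := ℕ))] using h)
  · simp

lemma linForm_smul (t : K) (a : Fin ℓ → K) : linForm (t • a) = C t * linForm a := by
  simp [linForm, Finset.mul_sum, mul_assoc]

lemma linForm_eq_zero_iff {a : Fin ℓ → K} : linForm a = 0 ↔ a = 0 := by
  constructor
  · intro h
    funext j
    have := coeff_linForm a j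
    rw [h] at this
    simpa using this.symm
  · rintro rfl; simp [linForm]

end ZC
section ZC2
variable {K : Type} [Field K] {ℓ : ℕ}

lemma mem_Dlog {η : Type} {c : η → Fin ℓ → K} {m : η → ℕ}
    {θ : Fin ℓ → MvPolynomial (Fin ℓ) K} :
    θ ∈ Dlog c m ↔ ∀ i, linForm (c i) ^ m i ∣ appL (c i) θ := Iff.rfl

lemma sum_homComp_range {σ : Type} (p : MvPolynomial σ K) {N : ℕ} (hN : p.totalDegree < N) :
    ∑ i ∈ Finset.range N, homogeneousComponent i p = p := by
  conv_rhs => rw [← MvPolynomial.sum_homogeneousComponent p]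
  refine (Finset.sum_subset (fun i hi => ?_) (fun i _ hi => ?_)).symm
  · rw [Finset.mem_range] at hi ⊢; omega
  · rw [Finset.mem_range, not_lt] at hi
    exact homogeneousComponent_eq_zero _ p (by omega)

lemma homComp_mul_right {σ : Type} (p b : MvPolynomial σ K) {e : ℕ}
    (hb : b.IsHomogeneous e) (n : ℕ) :
    homogeneousComponent n (p * b) =
      (if e ≤ n then homogeneousComponent (n - e) p else 0) * b := by
  classical
  set N := max p.totalDegree n + 1 with hN
  have hp : ∑ i ∈ Finset.range N, homogeneousComponent i p = p :=
    sum_homComp_range p (by omega)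
  calc homogeneousComponent n (p * b)
      = ∑ i ∈ Finset.range N, homogeneousComponent n (homogeneousComponent i p * b) := by
        rw [← hp, Finset.sum_mul, map_sum, hp]
    _ = ∑ i ∈ Finset.range N, if n = i + e then homogeneousComponent i p * b else 0 :=
        Finset.sum_congr rfl fun i _ => homogeneousComponent_of_mem
          ((mem_homogeneousSubmodule _ _).2
            ((homogeneousComponent_isHomogeneous i p).mul hb))
    _ = _ := by
        by_cases he : e ≤ n
        · rw [if_pos he,
            Finset.sum_congr rfl (fun i _ => if_congr (show (n = i + e) ↔ (i = n - e) by omega)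
              rfl rfl),
            Finset.sum_ite_eq' (Finset.range N) (n - e), if_pos (by rw [Finset.mem_range]; omega)]
        · rw [if_neg he, zero_mul]
          exact Finset.sum_eq_zero fun i _ => if_neg (by omega)

lemma restPoly_isHomogeneous {p : MvPolynomial (Fin (ℓ + 1)) K} {n : ℕ}
    (h : p.IsHomogeneous n) : (restPoly p).IsHomogeneous n := by
  have hg : ∀ i : Fin (ℓ + 1),
      ((Fin.cases 0 X : Fin (ℓ+1) → MvPolynomial (Fin ℓ) K) i).IsHomogeneous 1 := by
    intro i
    refine Fin.cases ?_ (fun j => ?_) i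
    · simpa using isHomogeneous_zero (Fin ℓ) K 1
    · simpa using isHomogeneous_X K j
  have := h.aeval _ hg
  rw [one_mul] at this
  exact this

lemma restPoly_homogeneousComponent (p : MvPolynomial (Fin (ℓ + 1)) K) (n : ℕ) :
    restPoly (homogeneousComponent n p) = homogeneousComponent n (restPoly p) := by
  classical
  set N := max p.totalDegree n + 1 with hN
  have hp : ∑ i ∈ Finset.range N, homogeneousComponent i p = p :=
    sum_homComp_range p (by omega)
  conv_rhs => rw [← hp, map_sum, map_sum]
  have : ∀ i ∈ Finset.range N,
      homogeneousComponent n (restPoly (homogeneousComponent i p)) =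
      if n = i then restPoly (homogeneousComponent i p) else 0 := fun i _ =>
    homogeneousComponent_of_mem ((mem_homogeneousSubmodule _ _).2
      (restPoly_isHomogeneous (homogeneousComponent_isHomogeneous i p)))
  rw [Finset.sum_congr rfl this, Finset.sum_ite_eq (Finset.range N) n,
    if_pos (by rw [Finset.mem_range]; omega)]

lemma dvd_homComp {a : Fin ℓ → K} {p : MvPolynomial (Fin ℓ) K} {m : ℕ}
    (h : linForm a ^ m ∣ p) (n : ℕ) : linForm a ^ m ∣ homogeneousComponent n p := by
  obtain ⟨q, rfl⟩ := h
  rw [mul_comm, homComp_mul_right q _ (by simpa using (linForm_isHomogeneous a).pow m)]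
  exact Dvd.intro_left _ rfl

lemma homComp_appL (a : Fin ℓ → K) (θ : Fin ℓ → MvPolynomial (Fin ℓ) K) (n : ℕ) :
    homogeneousComponent n (appL a θ) = appL a (fun j => homogeneousComponent n (θ j)) := by
  rw [appL_apply, appL_apply, map_sum]
  exact Finset.sum_congr rfl fun j _ => homogeneousComponent_C_mul _ _ _

lemma homComp_mem_Dlog {η : Type} {c : η → Fin ℓ → K} {m : η → ℕ}
    {θ : Fin ℓ → MvPolynomial (Fin ℓ) K} (h : θ ∈ Dlog c m) (n : ℕ) :
    (fun j => homogeneousComponent n (θ j)) ∈ Dlog c m := fun i => by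
  rw [← homComp_appL]
  exact dvd_homComp (h i) n

end ZC2
section ZC3
variable {K : Type} [Field K] {ℓ : ℕ}

lemma prime_X_mv {σ : Type} (i : σ) : Prime (X i : MvPolynomial σ K) := by
  have h1 : (X i : MvPolynomial σ K) =
      rename ((↑) : ({i} : Set σ) → σ) (X ⟨i, rfl⟩) := by rw [rename_X]
  rw [h1, prime_rename_iff]
  rw [← MulEquiv.prime_iff ((renameEquiv K (Equiv.equivPUnit.{_,1} (({i} : Set σ)))).trans
    (pUnitAlgEquiv K)).toMulEquiv]
  have h2 : ((renameEquiv K (Equiv.equivPUnit.{_,1} (({i} : Set σ)))).trans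
      (pUnitAlgEquiv K)).toMulEquiv (X ⟨i, rfl⟩) = Polynomial.X := by
    simp [pUnitAlgEquiv]
  rw [h2]
  exact Polynomial.prime_X

lemma prime_linForm {a : Fin ℓ → K} (ha : a ≠ 0) : Prime (linForm a) := by
  classical
  obtain ⟨j₀, hj₀⟩ : ∃ j, a j ≠ 0 := by
    by_contra hcon
    push_neg at hcon
    exact ha (funext hcon)
  set g : Fin ℓ → MvPolynomial (Fin ℓ) K := fun j =>
    if j = j₀ then C (a j₀)⁻¹ * (X j₀ - ∑ j' ∈ Finset.univ.erase j₀, C (a j') * X j')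
    else X j with hg_def
  set h : Fin ℓ → MvPolynomial (Fin ℓ) K := (fun j => if j = j₀ then linForm a else X j)
    with hh_def
  have hsplit : linForm a = C (a j₀) * X j₀ + ∑ j' ∈ Finset.univ.erase j₀, C (a j') * X j' := by
    rw [linForm, ← Finset.add_sum_erase _ _ (Finset.mem_univ j₀)]
  have hgj₀ : g j₀ = C (a j₀)⁻¹ * (X j₀ - ∑ j' ∈ Finset.univ.erase j₀, C (a j') * X j') := by
    simp only [hg_def, if_pos rfl]
  have hgne : ∀ x, x ≠ j₀ → g x = X x := fun x hx => by simp only [hg_def, if_neg hx]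
  have hhj₀ : h j₀ = linForm a := by simp only [hh_def, if_pos rfl]
  have hhne : ∀ x, x ≠ j₀ → h x = X x := fun x hx => by simp only [hh_def, if_neg hx]
  have hglin : aeval g (linForm a) = X j₀ := by
    rw [hsplit]
    simp only [map_add, map_mul, map_sum, aeval_X, aeval_C, algebraMap_eq]
    rw [Finset.sum_congr rfl (fun x hx => by
        rw [hgne x (Finset.ne_of_mem_erase hx)] :
      ∀ x ∈ Finset.univ.erase j₀, C (a x) * g x = C (a x) * X x),
      hgj₀, ← mul_assoc, ← C_mul, mul_inv_cancel₀ hj₀, C_1, one_mul, sub_add_cancel]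
  have hgh : ∀ j, aeval h (g j) = X j := by
    intro j
    by_cases hj : j = j₀
    · rw [hj, hgj₀]
      simp only [map_mul, map_sub, map_sum, aeval_X, aeval_C, algebraMap_eq]
      rw [Finset.sum_congr rfl (fun x hx => by
          rw [hhne x (Finset.ne_of_mem_erase hx)] :
        ∀ x ∈ Finset.univ.erase j₀, C (a x) * h x = C (a x) * X x),
        hhj₀, hsplit, add_sub_cancel_right, ← mul_assoc, ← C_mul, inv_mul_cancel₀ hj₀, C_1,
        one_mul]
    · rw [hgne j hj, aeval_X, hhne j hj]
  have hhg : ∀ j, aeval g (h j) = X j := by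
    intro j
    by_cases hj : j = j₀
    · rw [hj, hhj₀, hglin]
    · rw [hhne j hj, aeval_X, hgne j hj]
  have key : (AlgEquiv.ofAlgHom (aeval g) (aeval h)
      (MvPolynomial.algHom_ext fun j => by
        simp only [AlgHom.comp_apply, aeval_X, AlgHom.id_apply]; exact hhg j)
      (MvPolynomial.algHom_ext fun j => by
        simp only [AlgHom.comp_apply, aeval_X, AlgHom.id_apply]; exact hgh j)).toMulEquiv
      (linForm a) = X j₀ := hglin
  have hp := prime_X_mv (K := K) j₀
  rw [← key, MulEquiv.prime_iff] at hp
  exact hp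

lemma linForm_dvd_linForm {a b : Fin ℓ → K} (h : linForm b ∣ linForm a) :
    ∃ t : K, a = t • b := by
  obtain ⟨q, hq⟩ := h
  refine ⟨coeff 0 q, funext fun j => ?_⟩
  have h1 : linForm a = C (coeff 0 q) * linForm b := by
    have h2 := congrArg (homogeneousComponent 1) hq
    rw [homogeneousComponent_of_mem ((mem_homogeneousSubmodule _ _).2 (linForm_isHomogeneous a)),
      if_pos rfl, mul_comm, homComp_mul_right q _ (linForm_isHomogeneous b) 1] at h2
    rw [h2]
    simp [homogeneousComponent_zero, mul_comm]
  have h3 := congrArg (coeff (Finsupp.single j 1)) h1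
  rwa [coeff_linForm, coeff_C_mul, coeff_linForm] at h3

end ZC3
section ZC4
variable {K : Type} [Field K] {ℓ : ℕ}

lemma restPoly_rename (p : MvPolynomial (Fin ℓ) K) :
    restPoly (rename Fin.succ p) = p := by
  rw [restPoly, aeval_rename]
  have : ((Fin.cases 0 X : Fin (ℓ+1) → MvPolynomial (Fin ℓ) K) ∘ Fin.succ) = X := by
    funext j; simp
  rw [this]
  exact aeval_X_left_apply p

lemma restPoly_C (r : K) : restPoly (C r : MvPolynomial (Fin (ℓ+1)) K) = C r := by
  simp [restPoly, algebraMap_eq]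

lemma restPoly_X_zero : restPoly (X 0 : MvPolynomial (Fin (ℓ+1)) K) = 0 := by
  simp [restPoly]

lemma restPoly_X_succ (j : Fin ℓ) :
    restPoly (X j.succ : MvPolynomial (Fin (ℓ+1)) K) = X j := by
  simp [restPoly]

lemma restPoly_linForm (b : Fin (ℓ+1) → K) :
    restPoly (linForm b) = linForm (fun j => b j.succ) := by
  rw [linForm, map_sum, Fin.sum_univ_succ]
  simp only [map_mul, restPoly_C, restPoly_X_zero, restPoly_X_succ, mul_zero, zero_add]
  rw [linForm]

lemma restPoly_appL (a : Fin (ℓ+1) → K) (θ : Fin (ℓ+1) → MvPolynomial (Fin (ℓ+1)) K)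
    (h0 : θ 0 = 0) :
    restPoly (appL a θ) = appL (fun j => a j.succ) (restDer θ) := by
  rw [appL_apply, appL_apply, map_sum, Fin.sum_univ_succ, h0]
  simp only [map_mul, restPoly_C, mul_zero, map_zero, zero_add]
  rfl

lemma restPoly_eq_constantCoeff (p : MvPolynomial (Fin (ℓ+1)) K) :
    restPoly p = Polynomial.constantCoeff (finSuccEquiv K ℓ p) := by
  have h : ((Polynomial.constantCoeff).comp
      ((finSuccEquiv K ℓ : MvPolynomial (Fin (ℓ+1)) K ≃ₐ[K] _) :
        MvPolynomial (Fin (ℓ+1)) K →+* Polynomial (MvPolynomial (Fin ℓ) K))) =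
      (restPoly : MvPolynomial (Fin (ℓ+1)) K →ₐ[K] MvPolynomial (Fin ℓ) K).toRingHom := by
    apply MvPolynomial.ringHom_ext
    · intro r
      simp [restPoly_C, finSuccEquiv_apply, algebraMap_eq]
    · intro i
      refine Fin.cases ?_ (fun j => ?_) i
      · simp [finSuccEquiv_X_zero, restPoly_X_zero]
      · simp [finSuccEquiv_X_succ, restPoly_X_succ]
  exact (congrFun (congrArg DFunLike.coe h) p).symm

lemma X_dvd_of_restPoly_eq_zero {p : MvPolynomial (Fin (ℓ+1)) K} (h : restPoly p = 0) :
    X 0 ∣ p := by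
  have h1 : Polynomial.X ∣ finSuccEquiv K ℓ p := by
    rw [Polynomial.X_dvd_iff, ← Polynomial.constantCoeff_apply, ← restPoly_eq_constantCoeff, h]
  obtain ⟨r, hr⟩ := h1
  refine ⟨(finSuccEquiv K ℓ).symm r, ?_⟩
  apply (finSuccEquiv K ℓ).injective
  rw [map_mul, hr, finSuccEquiv_X_zero, AlgEquiv.apply_symm_apply]

lemma eq_zero_of_forall_X_pow_dvd {p : MvPolynomial (Fin (ℓ+1)) K}
    (h : ∀ k : ℕ, X 0 ^ k ∣ p) : p = 0 := by
  by_contra hp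
  have hF : finSuccEquiv K ℓ p ≠ 0 := fun hz => hp ((map_eq_zero_iff _
    (finSuccEquiv K ℓ).injective).mp hz)
  have h1 : ∀ k : ℕ, (Polynomial.X : Polynomial (MvPolynomial (Fin ℓ) K)) ^ k ∣
      finSuccEquiv K ℓ p := by
    intro k
    have := map_dvd (finSuccEquiv K ℓ) (h k)
    rwa [map_pow, finSuccEquiv_X_zero] at this
  have h2 := Polynomial.natDegree_le_of_dvd (h1 ((finSuccEquiv K ℓ p).natDegree + 1)) hF
  rw [Polynomial.natDegree_X_pow] at h2
  omega

end ZC4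
section ZC5
variable {K : Type} [Field K] {ℓ : ℕ} {η : Type} [Fintype η]

lemma mem_DlogZ {c : η → Fin (ℓ + 1) → K} {i₀ : η} {φ : Fin ℓ → MvPolynomial (Fin ℓ) K} :
    φ ∈ DlogZ c i₀ ↔ ∀ i, i ≠ i₀ → linForm (cbar c i) ^ zmult c i₀ i ∣ appL (cbar c i) φ := by
  classical
  constructor
  · intro h i hi
    have h2 : linForm (cbar c i) ^ (if i = i₀ then 0 else zmult c i₀ i) ∣
        appL (cbar c i) φ := h i
    rwa [if_neg hi] at h2
  · intro h i
    show linForm (cbar c i) ^ (if i = i₀ then 0 else zmult c i₀ i) ∣ appL (cbar c i) φ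
    by_cases hi : i = i₀
    · rw [if_pos hi, pow_zero]; exact one_dvd _
    · rw [if_neg hi]; exact h i hi

lemma linForm_c0 {c : η → Fin (ℓ + 1) → K} {i₀ : η}
    (hc₀ : c i₀ = fun j => if j = 0 then 1 else 0) :
    linForm (c i₀) = (X 0 : MvPolynomial (Fin (ℓ+1)) K) := by
  rw [linForm, hc₀, Fin.sum_univ_succ]
  simp [Fin.succ_ne_zero]

lemma appL_c0 {c : η → Fin (ℓ + 1) → K} {i₀ : η}
    (hc₀ : c i₀ = fun j => if j = 0 then 1 else 0)
    (θ : Fin (ℓ+1) → MvPolynomial (Fin (ℓ+1)) K) :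
    appL (c i₀) θ = θ 0 := by
  rw [appL_apply, hc₀, Fin.sum_univ_succ]
  simp [Fin.succ_ne_zero]

lemma cbar_ne_zero {c : η → Fin (ℓ + 1) → K}
    (hdist : ∀ i i', i ≠ i' → ∀ t : K, c i ≠ t • c i') {i₀ : η}
    (hc₀ : c i₀ = fun j => if j = 0 then 1 else 0) {i : η} (hi : i ≠ i₀) :
    cbar c i ≠ 0 := by
  intro hz
  apply hdist i i₀ hi (c i 0)
  funext j
  refine Fin.cases ?_ (fun j' => ?_) j
  · simp [hc₀]
  · have : cbar c i j' = 0 := by rw [hz]; rfl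
    rw [cbar] at this
    simp [hc₀, this, Fin.succ_ne_zero]

lemma restDer_mem_DlogZ {c : η → Fin (ℓ + 1) → K}
    (hne : ∀ i, c i ≠ 0)
    (hdist : ∀ i i', i ≠ i' → ∀ t : K, c i ≠ t • c i') {i₀ : η}
    (hc₀ : c i₀ = fun j => if j = 0 then 1 else 0)
    {θ : Fin (ℓ+1) → MvPolynomial (Fin (ℓ+1)) K}
    (hθ : θ ∈ Dlog c (fun _ => 1)) (h0 : θ 0 = 0) :
    restDer θ ∈ DlogZ c i₀ := by
  classical
  rw [mem_DlogZ]
  intro i hi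
  set β := linForm (cbar c i) with hβ
  set P : Finset η := Finset.univ.filter
    (fun i' => i' ≠ i₀ ∧ ∃ t : K, cbar c i' = t • cbar c i) with hP
  set Q : MvPolynomial (Fin (ℓ+1)) K :=
    ∑ j : Fin ℓ, C (cbar c i j) * θ j.succ with hQ
  have hrQ : restPoly Q = appL (cbar c i) (restDer θ) := by
    rw [hQ, map_sum, appL_apply]
    exact Finset.sum_congr rfl fun j _ => by rw [map_mul, restPoly_C]; rfl
  have hstep : ∀ i' ∈ P, ∃ t : K, t ≠ 0 ∧ cbar c i' = t • cbar c i := by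
    intro i' hi'
    rw [hP, Finset.mem_filter] at hi'
    obtain ⟨-, hne', t, ht⟩ := hi'
    refine ⟨t, fun h0' => ?_, ht⟩
    rw [h0', zero_smul] at ht
    exact cbar_ne_zero hdist hc₀ hne' ht
  choose t ht0 htc using hstep
  have hdvdQ : ∀ i' ∈ P, linForm (c i') ∣ Q := by
    intro i' hi'
    have h1 : appL (c i') θ = C (t i' hi') * Q := by
      rw [appL_apply, Fin.sum_univ_succ, h0, mul_zero, zero_add, hQ, Finset.mul_sum]
      refine Finset.sum_congr rfl fun j _ => ?_
      have : c i' j.succ = t i' hi' * cbar c i j := by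
        have := congrFun (htc i' hi') j
        simpa [cbar] using this
      rw [this, C_mul, mul_assoc]
    have h2 := hθ i'
    rw [pow_one, appL_apply] at h2
    rw [← appL_apply] at h2
    have h1' : Q = C (t i' hi')⁻¹ * appL (c i') θ := by
      rw [h1, ← mul_assoc, ← C_mul, inv_mul_cancel₀ (ht0 i' hi'), C_1, one_mul]
    rw [h1']
    exact h2.mul_left _
  have hpair : (P : Set η).Pairwise (Function.onFun IsRelPrime fun i' => linForm (c i')) := by
    intro x hx y hy hxy
    refine ((prime_linForm (hne x)).irreducible.isRelPrime_iff_not_dvd).2 fun hdvd => ?_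
    obtain ⟨u, hu⟩ := linForm_dvd_linForm hdvd
    exact hdist y x (Ne.symm hxy) u hu
  obtain ⟨R, hR⟩ := Finset.prod_dvd_of_isRelPrime hpair hdvdQ
  have hfac : ∀ i' ∈ P, β ∣ restPoly (linForm (c i')) := by
    intro i' hi'
    rw [restPoly_linForm]
    have : (fun j => c i' j.succ) = t i' hi' • cbar c i := htc i' hi'
    rw [this, linForm_smul]
    exact Dvd.dvd.mul_left dvd_rfl _
  have hcard : zmult c i₀ i = P.card := by
    rw [zmult, hP]
  have hfin : β ^ zmult c i₀ i ∣ restPoly Q := by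
    rw [hcard]
    calc β ^ P.card = ∏ _i' ∈ P, β := (Finset.prod_const β).symm
      _ ∣ ∏ i' ∈ P, restPoly (linForm (c i')) := Finset.prod_dvd_prod_of_dvd _ _ hfac
      _ ∣ restPoly Q := by
          rw [hR, map_mul, map_prod]
          exact Dvd.intro _ rfl
  rwa [hrQ] at hfin

end ZC5

/-- **Ziegler's converse criterion.**  Let `A` be a central arrangement in `K^{ℓ+1}`
and `H₁ ∈ A` (indexed by `i₀`), in coordinates such that `α_{H₁} = x_0`.  If the
restriction map `ρ : D₁(A) → D(A^{H₁}, m^{H₁})` is surjective and the Ziegler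
multirestriction is free with exponents `(d 0, …, d (ℓ−1))`, then `A` is free with
exponents `(1, d 0, …, d (ℓ−1))`. -/
theorem ziegler_converse {K : Type} [Field K] [CharZero K] {ℓ : ℕ} {η : Type}
    [Fintype η]
    (c : η → Fin (ℓ + 1) → K)
    (hne : ∀ i, c i ≠ 0)
    (hdist : ∀ i i', i ≠ i' → ∀ t : K, c i ≠ t • c i')
    (i₀ : η)
    (hc₀ : c i₀ = fun j => if j = 0 then 1 else 0)
    (hsurj : ∀ φ ∈ DlogZ c i₀, ∃ θ, θ ∈ Dlog c (fun _ => 1) ∧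
      appL (c i₀) θ = 0 ∧ restDer θ = φ)
    (d : Fin ℓ → ℕ)
    (b' : Module.Basis (Fin ℓ) (MvPolynomial (Fin ℓ) K) (DlogZ c i₀))
    (hb' : ∀ i j, ((b' i : Fin ℓ → MvPolynomial (Fin ℓ) K) j).IsHomogeneous (d i)) :
    ∃ b : Module.Basis (Fin (ℓ + 1)) (MvPolynomial (Fin (ℓ + 1)) K) (Dlog c fun _ => 1),
      ∀ i j, ((b i : Fin (ℓ + 1) → MvPolynomial (Fin (ℓ + 1)) K) j).IsHomogeneous
        ((Fin.cons 1 d : Fin (ℓ + 1) → ℕ) i) := by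
  classical
  set S := MvPolynomial (Fin (ℓ + 1)) K with hS
  -- the Euler derivation
  set θE : Fin (ℓ+1) → S := fun j => X j with hθEdef
  have hθEmem : θE ∈ Dlog c (fun _ => 1) := by
    intro i
    have h1 : appL (c i) θE = linForm (c i) := by rw [appL_apply, linForm]
    rw [h1, pow_one]
  -- homogeneous lifts of the basis of the Ziegler restriction
  have hlift : ∀ i : Fin ℓ, ∃ Θ : Fin (ℓ+1) → S, Θ ∈ Dlog c (fun _ => 1) ∧ Θ 0 = 0 ∧
      restDer Θ = (b' i : Fin ℓ → MvPolynomial (Fin ℓ) K) ∧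
      ∀ j, (Θ j).IsHomogeneous (d i) := by
    intro i
    obtain ⟨θ, hθm, hθ0, hθr⟩ := hsurj (b' i) (b' i).2
    have hθ00 : θ 0 = 0 := by rw [← appL_c0 hc₀ θ]; exact hθ0
    refine ⟨fun j => homogeneousComponent (d i) (θ j), homComp_mem_Dlog hθm _,
      by show homogeneousComponent (d i) (θ 0) = 0; rw [hθ00, map_zero], ?_, fun j => homogeneousComponent_isHomogeneous _ _⟩
    funext j
    show restPoly (homogeneousComponent (d i) (θ j.succ)) = _
    rw [restPoly_homogeneousComponent]
    have h2 : restPoly (θ j.succ) = (b' i : Fin ℓ → MvPolynomial (Fin ℓ) K) j :=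
      congrFun hθr j
    rw [h2, homogeneousComponent_of_mem ((mem_homogeneousSubmodule _ _).2 (hb' i j)),
      if_pos rfl]
  choose Θ hΘmem hΘ0 hΘrest hΘhom using hlift
  set B : Fin (ℓ+1) → (Fin (ℓ+1) → S) := Fin.cons θE Θ with hBdef
  have hBmem : ∀ i, B i ∈ Dlog c (fun _ => 1) := by
    intro i
    refine Fin.cases ?_ (fun i' => ?_) i
    · rw [hBdef, Fin.cons_zero]; exact hθEmem
    · rw [hBdef, Fin.cons_succ]; exact hΘmem i'
  have hBhom : ∀ i j, ((B i) j).IsHomogeneous ((Fin.cons 1 d : Fin (ℓ + 1) → ℕ) i) := by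
    intro i j
    refine Fin.cases ?_ (fun i' => ?_) i
    · rw [hBdef, Fin.cons_zero, Fin.cons_zero]
      exact isHomogeneous_X K j
    · rw [hBdef, Fin.cons_succ, Fin.cons_succ]
      exact hΘhom i' j
  -- key: every homogeneous member of D(A) lies in the span of B
  have span_hom : ∀ n : ℕ, ∀ θ : Fin (ℓ+1) → S, θ ∈ Dlog c (fun _ => 1) →
      (∀ j, (θ j).IsHomogeneous n) →
      θ ∈ Submodule.span S (Set.range B) := by
    intro n
    induction n using Nat.strong_induction_on with
    | _ n IH =>
    intro θ hθ hhom
    have h1 : X 0 ∣ θ 0 := by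
      have h := hθ i₀
      rwa [pow_one, appL_c0 hc₀, linForm_c0 hc₀] at h
    obtain ⟨g0, hg0⟩ := h1
    set g' : S := if n = 0 then 0 else homogeneousComponent (n-1) g0 with hg'def
    have hg'eq : g' = (if 1 ≤ n then homogeneousComponent (n-1) g0 else 0) := by
      by_cases hn : n = 0
      · simp [hg'def, hn]
      · rw [hg'def, if_neg hn, if_pos (by omega)]
    have hθ0' : θ 0 = g' * X 0 := by
      have h2 : θ 0 = homogeneousComponent n (θ 0) := by
        rw [homogeneousComponent_of_mem ((mem_homogeneousSubmodule _ _).2 (hhom 0)),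
          if_pos rfl]
      conv_lhs => rw [h2, hg0, mul_comm, homComp_mul_right g0 _ (isHomogeneous_X K 0) n]
      rw [hg'eq]
    have hg'hom : g'.IsHomogeneous (n - 1) := by
      by_cases hn : n = 0
      · simp only [hg'def, if_pos hn]; exact isHomogeneous_zero _ _ _
      · simp only [hg'def, if_neg hn]; exact homogeneousComponent_isHomogeneous _ _
    set θ1 : Fin (ℓ+1) → S := θ - g' • θE with hθ1def
    have hθ1mem : θ1 ∈ Dlog c (fun _ => 1) :=
      Submodule.sub_mem _ hθ (Submodule.smul_mem _ _ hθEmem)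
    have hθ1app : ∀ j, θ1 j = θ j - g' * X j := by
      intro j; rw [hθ1def]; simp [hθEdef]
    have hθ10 : θ1 0 = 0 := by rw [hθ1app, hθ0', sub_self]
    have hθ1hom : ∀ j, (θ1 j).IsHomogeneous n := by
      intro j
      rw [hθ1app]
      apply (hhom j).sub
      by_cases hn : n = 0
      · have hz : g' = 0 := by simp [hg'def, hn]
        rw [hz, zero_mul]; exact isHomogeneous_zero _ _ _
      · have h3 := hg'hom.mul (isHomogeneous_X K j)
        have : n - 1 + 1 = n := by omega
        rwa [this] at h3
    have hφmem : restDer θ1 ∈ DlogZ c i₀ := restDer_mem_DlogZ hne hdist hc₀ hθ1mem hθ10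
    have hexp : restDer θ1 = ∑ i : Fin ℓ,
        (b'.repr ⟨restDer θ1, hφmem⟩ i) • (b' i : Fin ℓ → MvPolynomial (Fin ℓ) K) := by
      have h4 := b'.sum_repr ⟨restDer θ1, hφmem⟩
      have h5 := congrArg (Submodule.subtype (DlogZ c i₀)) h4
      rw [map_sum] at h5
      simp only [Submodule.coe_subtype, map_smul] at h5
      exact h5.symm
    set f' : Fin ℓ → MvPolynomial (Fin ℓ) K := fun i =>
      if d i ≤ n then homogeneousComponent (n - d i) (b'.repr ⟨restDer θ1, hφmem⟩ i) else 0
      with hf'def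
    have hexp' : ∀ j, restDer θ1 j =
        ∑ i, f' i * (b' i : Fin ℓ → MvPolynomial (Fin ℓ) K) j := by
      intro j
      have h6 : (restDer θ1 j).IsHomogeneous n := restPoly_isHomogeneous (hθ1hom j.succ)
      have h7 : restDer θ1 j = homogeneousComponent n (restDer θ1 j) := by
        rw [homogeneousComponent_of_mem ((mem_homogeneousSubmodule _ _).2 h6), if_pos rfl]
      conv_lhs => rw [h7, hexp]
      rw [Finset.sum_apply, map_sum]
      refine Finset.sum_congr rfl fun i _ => ?_
      rw [Pi.smul_apply, smul_eq_mul, homComp_mul_right _ _ (hb' i j) n, hf'def]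
    set θ2 : Fin (ℓ+1) → S := θ1 - ∑ i : Fin ℓ, (rename Fin.succ (f' i)) • Θ i with hθ2def
    have hθ2mem : θ2 ∈ Dlog c (fun _ => 1) :=
      Submodule.sub_mem _ hθ1mem
        (Submodule.sum_mem _ fun i _ => Submodule.smul_mem _ _ (hΘmem i))
    have hθ2app : ∀ j, θ2 j = θ1 j - ∑ i, (rename Fin.succ (f' i)) * Θ i j := by
      intro j; rw [hθ2def]; simp [Finset.sum_apply]
    have hθ20 : θ2 0 = 0 := by
      rw [hθ2app, hθ10]
      simp only [hΘ0, mul_zero]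
      simp
    have hθ2hom : ∀ j, (θ2 j).IsHomogeneous n := by
      intro j
      rw [hθ2app]
      refine (hθ1hom j).sub (MvPolynomial.IsHomogeneous.sum _ _ _ fun i _ => ?_)
      by_cases hdi : d i ≤ n
      · have h8 : (rename Fin.succ (f' i)).IsHomogeneous (n - d i) := by
          apply MvPolynomial.IsHomogeneous.rename_isHomogeneous
          rw [hf'def]
          simp only [if_pos hdi]
          exact homogeneousComponent_isHomogeneous _ _
        have h9 := h8.mul (hΘhom i j)
        have : n - d i + d i = n := by omega
        rwa [this] at h9
      · have hz : f' i = 0 := by rw [hf'def]; simp [hdi]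
        rw [hz, map_zero, zero_mul]
        exact isHomogeneous_zero _ _ _
    have hθ2rest : ∀ j : Fin ℓ, restPoly (θ2 j.succ) = 0 := by
      intro j
      rw [hθ2app, map_sub, map_sum]
      have h10 : ∀ i, restPoly ((rename Fin.succ (f' i)) * Θ i j.succ) =
          f' i * (b' i : Fin ℓ → MvPolynomial (Fin ℓ) K) j := by
        intro i
        rw [map_mul, restPoly_rename]
        congr 1
        exact congrFun (hΘrest i) j
      rw [Finset.sum_congr rfl fun i _ => h10 i]
      have h11 : restPoly (θ1 j.succ) = restDer θ1 j := rfl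
      rw [h11, hexp' j, sub_self]
    have hdvd2 : ∀ j : Fin ℓ, X 0 ∣ θ2 j.succ :=
      fun j => X_dvd_of_restPoly_eq_zero (hθ2rest j)
    have hmem0 : θE ∈ Set.range B := ⟨0, by rw [hBdef, Fin.cons_zero]⟩
    have hmemi : ∀ i : Fin ℓ, Θ i ∈ Set.range B := fun i => ⟨i.succ, by rw [hBdef, Fin.cons_succ]⟩
    by_cases hn : n = 0
    · have hθ2z : θ2 = 0 := by
        funext j'
        refine Fin.cases ?_ (fun j => ?_) j'
        · exact hθ20
        · obtain ⟨r, hr⟩ := hdvd2 j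
          have h12 : θ2 j.succ = homogeneousComponent n (θ2 j.succ) := by
            rw [homogeneousComponent_of_mem ((mem_homogeneousSubmodule _ _).2 (hθ2hom j.succ)),
              if_pos rfl]
          rw [h12, hr, mul_comm, homComp_mul_right r _ (isHomogeneous_X K 0) n,
            if_neg (by omega), zero_mul]
          rfl
      have hθeq : θ = g' • θE + ∑ i, (rename Fin.succ (f' i)) • Θ i := by
        have h13 : θ1 = ∑ i, (rename Fin.succ (f' i)) • Θ i := by
          rw [← sub_eq_zero, ← hθ2def]; exact hθ2z
        rw [hθ1def] at h13
        rw [← h13]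
        abel
      rw [hθeq]
      exact Submodule.add_mem _
        (Submodule.smul_mem _ _ (Submodule.subset_span hmem0))
        (Submodule.sum_mem _ fun i _ =>
          Submodule.smul_mem _ _ (Submodule.subset_span (hmemi i)))
    · choose r hr using hdvd2
      set ψ : Fin (ℓ+1) → S :=
        Fin.cases 0 (fun j => homogeneousComponent (n-1) (r j)) with hψdef
      have hψ0 : ψ 0 = 0 := by simp [hψdef]
      have hψsucc : ∀ j : Fin ℓ, ψ j.succ = homogeneousComponent (n-1) (r j) := by
        intro j; simp [hψdef]
      have hψX : (X 0 : S) • ψ = θ2 := by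
        funext j'
        refine Fin.cases ?_ (fun j => ?_) j'
        · rw [Pi.smul_apply, hψ0, smul_zero, hθ20]
        · rw [Pi.smul_apply, hψsucc, smul_eq_mul]
          have h14 : θ2 j.succ = homogeneousComponent n (θ2 j.succ) := by
            rw [homogeneousComponent_of_mem ((mem_homogeneousSubmodule _ _).2 (hθ2hom j.succ)),
              if_pos rfl]
          rw [h14, hr, mul_comm (X (0 : Fin (ℓ+1))) (r j),
            homComp_mul_right (r j) _ (isHomogeneous_X K 0) n, if_pos (by omega), mul_comm]
      have hψmem : ψ ∈ Dlog c (fun _ => 1) := by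
        intro i
        rw [pow_one]
        by_cases hi : i = i₀
        · rw [hi, appL_c0 hc₀, hψ0]
          exact dvd_zero _
        · have h15 := hθ2mem i
          rw [pow_one] at h15
          have h16 : appL (c i) θ2 = X 0 * appL (c i) ψ := by
            rw [← hψX, map_smul, smul_eq_mul]
          rw [h16] at h15
          refine ((prime_linForm (hne i)).dvd_or_dvd h15).resolve_left fun hd => ?_
          rw [← linForm_c0 hc₀] at hd
          obtain ⟨t, ht⟩ := linForm_dvd_linForm hd
          exact hdist i₀ i (fun h => hi h.symm) t ht
      have hψhom : ∀ j, (ψ j).IsHomogeneous (n-1) := by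
        intro j'
        refine Fin.cases ?_ (fun j => ?_) j'
        · rw [hψ0]; exact isHomogeneous_zero _ _ _
        · rw [hψsucc]; exact homogeneousComponent_isHomogeneous _ _
      have hψspan := IH (n-1) (by omega) ψ hψmem hψhom
      have hθeq : θ = g' • θE + (∑ i, (rename Fin.succ (f' i)) • Θ i) + (X 0 : S) • ψ := by
        rw [hψX, hθ2def, hθ1def]
        abel
      rw [hθeq]
      exact Submodule.add_mem _
        (Submodule.add_mem _
          (Submodule.smul_mem _ _ (Submodule.subset_span hmem0))
          (Submodule.sum_mem _ fun i _ =>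
            Submodule.smul_mem _ _ (Submodule.subset_span (hmemi i))))
        (Submodule.smul_mem _ _ hψspan)
  -- spanning
  have span_all : ∀ θ : Fin (ℓ+1) → S, θ ∈ Dlog c (fun _ => 1) →
      θ ∈ Submodule.span S (Set.range B) := by
    intro θ hθ
    set N := (Finset.univ.sup fun j => (θ j).totalDegree) + 1 with hN
    have hdec : θ = ∑ n ∈ Finset.range N, (fun j => homogeneousComponent n (θ j)) := by
      funext j
      rw [Finset.sum_apply]
      exact (sum_homComp_range (θ j)
        (by
          have hle : (θ j).totalDegree ≤ Finset.univ.sup (fun j => (θ j).totalDegree) :=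
            Finset.le_sup (f := fun j => (θ j).totalDegree) (Finset.mem_univ j)
          omega)).symm
    rw [hdec]
    exact Submodule.sum_mem _ fun n _ => span_hom n _ (homComp_mem_Dlog hθ n)
      (fun j => homogeneousComponent_isHomogeneous _ _)
  -- linear independence
  have hdesc : ∀ k : ℕ, ∀ h : Fin ℓ → S,
      (∀ j' : Fin (ℓ+1), ∑ i, h i * Θ i j' = 0) → ∀ i, X 0 ^ k ∣ h i := by
    intro k
    induction k with
    | zero => intro h _ i; simpa using one_dvd _
    | succ k IHk =>
      intro h hh i
      have hrest : ∀ j : Fin ℓ,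
          ∑ i, restPoly (h i) * (b' i : Fin ℓ → MvPolynomial (Fin ℓ) K) j = 0 := by
        intro j
        have h17 := congrArg restPoly (hh j.succ)
        rw [map_sum, map_zero] at h17
        rw [← h17]
        refine Finset.sum_congr rfl fun i' _ => ?_
        rw [map_mul]
        congr 1
        exact (congrFun (hΘrest i') j).symm
      have hz : ∀ i', restPoly (h i') = 0 := by
        have hLI : LinearIndependent (MvPolynomial (Fin ℓ) K)
            (fun i => ((b' i : Fin ℓ → MvPolynomial (Fin ℓ) K))) :=
          b'.linearIndependent.map' (DlogZ c i₀).subtype (Submodule.ker_subtype _)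
        refine Fintype.linearIndependent_iff.mp hLI (fun i => restPoly (h i)) ?_
        funext j
        rw [Finset.sum_apply]
        simpa [smul_eq_mul] using hrest j
      choose u hu using fun i' => X_dvd_of_restPoly_eq_zero (hz i')
      have hu0 : ∀ j', ∑ i', u i' * Θ i' j' = 0 := by
        intro j'
        have h18 := hh j'
        have h19 : ∀ i', h i' * Θ i' j' = X 0 * (u i' * Θ i' j') := by
          intro i'; rw [hu i', mul_assoc]
        rw [Finset.sum_congr rfl fun i' _ => h19 i', ← Finset.mul_sum] at h18
        rcases mul_eq_zero.mp h18 with h20 | h20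
        · exact absurd h20 (X_ne_zero 0)
        · exact h20
      rw [hu i, pow_succ']
      exact mul_dvd_mul_left (X 0) (IHk u hu0 i)
  have hLI_B : LinearIndependent S B := by
    refine Fintype.linearIndependent_iff.mpr fun g hg => ?_
    have hg0 : g 0 = 0 := by
      have h21 := congrFun hg 0
      rw [Finset.sum_apply, Fin.sum_univ_succ] at h21
      simp only [Pi.smul_apply, smul_eq_mul, hBdef, Fin.cons_zero, Fin.cons_succ,
        Pi.zero_apply, hθEdef] at h21
      rw [Finset.sum_eq_zero (fun i _ => by rw [hΘ0 i, mul_zero]), add_zero] at h21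
      rcases mul_eq_zero.mp h21 with h | h
      · exact h
      · exact absurd h (X_ne_zero 0)
    have hsum : ∀ j', ∑ i, g i.succ * Θ i j' = 0 := by
      intro j'
      have h23 := congrFun hg j'
      rw [Finset.sum_apply, Fin.sum_univ_succ] at h23
      simp only [Pi.smul_apply, smul_eq_mul, hBdef, Fin.cons_zero, Fin.cons_succ, hg0,
        zero_mul, zero_add, Pi.zero_apply] at h23
      exact h23
    have hall : ∀ i : Fin ℓ, g i.succ = 0 := fun i =>
      eq_zero_of_forall_X_pow_dvd (fun k => hdesc k _ hsum i)
    intro i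
    refine Fin.cases hg0 hall i
  -- assemble the basis of the submodule
  set M := Dlog c (fun _ => (1:ℕ)) with hM
  set Bt : Fin (ℓ+1) → M := fun i => ⟨B i, hBmem i⟩ with hBtdef
  have hLI : LinearIndependent S Bt := by
    apply LinearIndependent.of_comp M.subtype
    convert hLI_B
    rfl
  have hSP : ⊤ ≤ Submodule.span S (Set.range Bt) := by
    intro x _
    have hx := span_all x.1 x.2
    have h24 : (x : Fin (ℓ+1) → S) ∈
        Submodule.map M.subtype (Submodule.span S (Set.range Bt)) := by
      rw [Submodule.map_span, ← Set.range_comp]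
      exact hx
    obtain ⟨y, hy, hyx⟩ := h24
    rwa [show y = x from Subtype.ext hyx] at hy
  refine ⟨Module.Basis.mk hLI hSP, fun i j => ?_⟩
  rw [Module.Basis.mk_apply]
  exact hBhom i j
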